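/- Let k be a positive natural number and for each β ∈ ℝ^k let 𝒮_β be the set of probability measures ℙ on the Borel σ-algebra of ℝ^{1+k} such that (i) the coordinate projections (π₁, …, π_{k+1}) form a fundamental random vector on (ℝ^{1+k}, Borel, ℙ) and (ii) η := π₁ − ∑_{j=2}^{k+1} π_j β_{j−1} is L²(ℙ) with ∫ π_j η dℙ = 0 for all 2 ≤ j ≤ k+1. Let Θ ⊆ ℝ^k and let (ℙ^β)_{β ∈ Θ} be any family with ℙ^β ∈ 𝒮_β for every β ∈ Θ. Then the map β ↦ ℙ^β from Θ to the set of probability measures on ℝ^{1+k} is injective. -/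

import Mathlib

open MeasureTheory ProbabilityTheory

/-- A random vector `(Y, X₁, …, X_k)` is a *fundamental random vector* iff each
component is L², no `X j` is almost surely `0`, and the `X j` are pairwise
orthogonal. -/
def IsFundamentalRandomVector {Ω : Type*} [MeasurableSpace Ω] (P : Measure Ω) {k : ℕ}
    (Y : Ω → ℝ) (X : Fin k → Ω → ℝ) : Prop :=
  MemLp Y 2 P ∧ (∀ j, MemLp (X j) 2 P) ∧ (∀ j, ¬ (X j =ᵐ[P] 0)) ∧
    ∀ j j', j ≠ j' → ∫ ω, X j ω * X j' ω ∂P = 0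

/-- `𝒮_β`: the set of Borel probability measures `P` on `ℝ^{1+k}` such that the
coordinate projections form a fundamental random vector on `(ℝ^{1+k}, Borel, P)` and
`η := π₁ − ∑ j, π_{j+1} β_j` is L²(P) and orthogonal to every covariate coordinate. -/
def Sset (k : ℕ) (β : Fin k → ℝ) : Set (Measure (Fin (k + 1) → ℝ)) :=
  {P | IsProbabilityMeasure P ∧
    IsFundamentalRandomVector P (fun x => x 0) (fun j x => x j.succ) ∧
    MemLp (fun x => x 0 - ∑ j, x j.succ * β j) 2 P ∧
    ∀ j : Fin k, ∫ x, x j.succ * (x 0 - ∑ i, x i.succ * β i) ∂P = 0}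

/-!
Under `P^β`, orthogonality of `η` to the covariate `X_j`, together with the pairwise
orthogonality of the covariates, reduces the normal equations to
`E[X_j Y] = β_j E[X_j²]`. Since `X_j` is not a.s. `0`, `E[X_j²] > 0`, so
`β_j = E[X_j Y] / E[X_j²]` is a function of the measure alone.
-/

section

variable {Ω ι : Type*} [MeasurableSpace Ω] {P : Measure Ω}

lemma integral_mul_self_ne_zero_of_not_ae_eq_zero {f : Ω → ℝ} (hf : MemLp f 2 P)
    (hf0 : ¬ f =ᵐ[P] 0) : ∫ ω, f ω * f ω ∂P ≠ 0 := by
  intro h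
  refine hf0 ?_
  have hsq : (fun ω => f ω * f ω) =ᵐ[P] 0 :=
    (integral_eq_zero_iff_of_nonneg (fun ω => mul_self_nonneg (f ω))
      (hf.integrable_mul hf)).mp h
  filter_upwards [hsq] with ω hω
  exact mul_self_eq_zero.mp hω

variable [Fintype ι] {Y : Ω → ℝ} {X : ι → Ω → ℝ}

lemma integral_mul_sub_sum_mul_of_orthogonal (hY : MemLp Y 2 P) (hX : ∀ i, MemLp (X i) 2 P)
    (horth : ∀ i i', i ≠ i' → ∫ ω, X i ω * X i' ω ∂P = 0) (β : ι → ℝ) (j : ι) :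
    ∫ ω, X j ω * (Y ω - ∑ i, X i ω * β i) ∂P
      = ∫ ω, X j ω * Y ω ∂P - β j * ∫ ω, X j ω * X j ω ∂P := by
  have hXX : ∀ i, Integrable (fun ω => β i * (X j ω * X i ω)) P :=
    fun i => ((hX j).integrable_mul (hX i)).const_mul (β i)
  have hsum : ∫ ω, ∑ i, β i * (X j ω * X i ω) ∂P = β j * ∫ ω, X j ω * X j ω ∂P := by
    rw [integral_finsetSum _ fun i _ => hXX i]
    simp_rw [integral_const_mul]
    refine Finset.sum_eq_single_of_mem j (Finset.mem_univ j) fun i _ hij => ?_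
    rw [horth j i (Ne.symm hij), mul_zero]
  have hXY : Integrable (fun ω => X j ω * Y ω) P := (hX j).integrable_mul hY
  rw [← hsum, ← integral_sub hXY (integrable_finsetSum _ fun i _ => hXX i)]
  congr 1
  funext ω
  rw [mul_sub, Finset.mul_sum]
  congr 1
  exact Finset.sum_congr rfl fun i _ => by ring

lemma eq_div_of_integral_mul_sub_sum_mul_eq_zero (hY : MemLp Y 2 P)
    (hX : ∀ i, MemLp (X i) 2 P) (hX0 : ∀ i, ¬ X i =ᵐ[P] 0)
    (horth : ∀ i i', i ≠ i' → ∫ ω, X i ω * X i' ω ∂P = 0) {β : ι → ℝ}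
    (hη : ∀ j, ∫ ω, X j ω * (Y ω - ∑ i, X i ω * β i) ∂P = 0) (j : ι) :
    β j = (∫ ω, X j ω * Y ω ∂P) / ∫ ω, X j ω * X j ω ∂P := by
  have hj := hη j
  rw [integral_mul_sub_sum_mul_of_orthogonal hY hX horth, sub_eq_zero] at hj
  rw [hj, mul_div_cancel_right₀ _ (integral_mul_self_ne_zero_of_not_ae_eq_zero (hX j) (hX0 j))]

end

lemma eq_div_of_mem_Sset {k : ℕ} {β : Fin k → ℝ} {P : Measure (Fin (k + 1) → ℝ)}
    (hP : P ∈ Sset k β) (j : Fin k) :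
    β j = (∫ x, x j.succ * x 0 ∂P) / ∫ x, x j.succ * x j.succ ∂P := by
  obtain ⟨-, ⟨hY, hX, hX0, horth⟩, -, hη⟩ := hP
  exact eq_div_of_integral_mul_sub_sum_mul_eq_zero hY hX hX0 horth hη j

theorem stmt14_general (k : ℕ) (Θ : Set (Fin k → ℝ))
    (Pfam : (Fin k → ℝ) → Measure (Fin (k + 1) → ℝ))
    (hPfam : ∀ β ∈ Θ, Pfam β ∈ Sset k β) :
    Set.InjOn Pfam Θ := by
  intro β₁ hβ₁ β₂ hβ₂ hP
  funext j
  rw [eq_div_of_mem_Sset (hPfam β₁ hβ₁) j, eq_div_of_mem_Sset (hPfam β₂ hβ₂) j, hP]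

/-- **Theorem 6 (parametrization injectiveness of stochastic linear regression).**
Any choice family `(P^β)_{β ∈ Θ}` with `P^β ∈ 𝒮_β` for every `β ∈ Θ ⊆ ℝᵏ` yields an
injective map `β ↦ P^β` on `Θ`. -/
theorem stmt14 (k : ℕ) (hk : 0 < k) (Θ : Set (Fin k → ℝ))
    (Pfam : (Fin k → ℝ) → Measure (Fin (k + 1) → ℝ))
    (hPfam : ∀ β ∈ Θ, Pfam β ∈ Sset k β) :
    Set.InjOn Pfam Θ :=
  stmt14_general k Θ Pfam hPfam
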